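/- Let $J$ be an infinite set and $\lambda,\chi\in\mathbb{R}^J$ satisfy the positive energy condition for $W(A_J)$. Then the triple $(J,\lambda,\chi)$ is essentially bounded: for every $m$ in the range of $\lambda$, if $m$ is not the supremum of the range of $\lambda$ then $\{d_j:\lambda_j=m\}$ is bounded below, and if $m$ is not the infimum of the range of $\lambda$ then $\{d_j:\lambda_j=m\}$ is bounded above. -/

import Mathlib

open scoped BigOperators

/-- A permutation of `J` is finitely supported if it fixes all but finitely many elements. -/
def IsFinPerm {J : Type*} (w : Equiv.Perm J) : Prop := {j | w j ≠ j}.Finite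

/-- A finitely supported sign function: takes values `±1` and equals `1` outside a finite set. -/
def IsSign {J : Type*} (σ : J → ℝ) : Prop :=
  (∀ j, σ j = 1 ∨ σ j = -1) ∧ {j | σ j ≠ 1}.Finite

/-- A finitely supported sign function whose support has even cardinality. -/
def IsEvenSign {J : Type*} (σ : J → ℝ) : Prop :=
  IsSign σ ∧ ∃ F : Finset J, (∀ j, σ j = -1 ↔ j ∈ F) ∧ Even F.card

/-- The energy `λ(w⁻¹.χ - χ) = ∑ⱼ λⱼ (d_{w(j)} - dⱼ)` (a finite sum for `w` finitely
supported). -/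
noncomputable def energyA {J : Type*} (lam d : J → ℝ) (w : Equiv.Perm J) : ℝ :=
  ∑ᶠ j, lam j * (d (w j) - d j)

/-- The energy `λ(σ w⁻¹.χ - χ) = ∑ⱼ λⱼ (σⱼ d_{w(j)} - dⱼ)`. -/
noncomputable def energyB {J : Type*} (lam d σ : J → ℝ) (w : Equiv.Perm J) : ℝ :=
  ∑ᶠ j, lam j * (σ j * d (w j) - d j)

/-- Positive energy condition for `W(A_J)`. -/
def PECA {J : Type*} (lam d : J → ℝ) : Prop :=
  ∃ C : ℝ, ∀ w : Equiv.Perm J, IsFinPerm w → C ≤ energyA lam d w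

/-- Positive energy condition for `W(B_J)`. -/
def PECB {J : Type*} (lam d : J → ℝ) : Prop :=
  ∃ C : ℝ, ∀ (σ : J → ℝ) (w : Equiv.Perm J), IsSign σ → IsFinPerm w → C ≤ energyB lam d σ w

/-- Positive energy condition for `W(D_J)`. -/
def PECD {J : Type*} (lam d : J → ℝ) : Prop :=
  ∃ C : ℝ, ∀ (σ : J → ℝ) (w : Equiv.Perm J), IsEvenSign σ → IsFinPerm w → C ≤ energyB lam d σ w


/-!
Testing the positive energy condition on a transposition `(a b)` gives
`C ≤ (λ_a - λ_b)(d_b - d_a)`. Fixing `a` with `λ_a > m` and letting `b` run over the level set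
`λ_b = m` bounds `d_b` below by `d_a + C / (λ_a - m)`; the upper bound is the same argument
applied to `(-λ, -d)`, which has the same energies.
-/

lemma isFinPerm_swap {J : Type*} [DecidableEq J] (a b : J) : IsFinPerm (Equiv.swap a b) :=
  (Set.toFinite {a, b}).subset fun _ hj => (Equiv.swap_apply_ne_self_iff.mp hj).2

lemma energyA_swap {J : Type*} [DecidableEq J] (lam d : J → ℝ) {a b : J} (hab : a ≠ b) :
    energyA lam d (Equiv.swap a b) = (lam a - lam b) * (d b - d a) := by
  have hsupp : (Function.support fun j => lam j * (d (Equiv.swap a b j) - d j))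
      ⊆ (({a, b} : Finset J) : Set J) := by
    intro j hj
    simpa using (Equiv.swap_apply_ne_self_iff.mp fun h => hj (by simp [h])).2
  rw [energyA, finsum_eq_sum_of_support_subset _ hsupp, Finset.sum_pair hab,
    Equiv.swap_apply_left, Equiv.swap_apply_right]
  ring

lemma energyA_neg {J : Type*} (lam d : J → ℝ) (w : Equiv.Perm J) :
    energyA (-lam) (-d) w = energyA lam d w := by
  simp only [energyA, Pi.neg_apply]
  exact finsum_congr fun j => by ring

lemma PECA.neg {J : Type*} {lam d : J → ℝ} (hpec : PECA lam d) : PECA (-lam) (-d) := by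
  simpa only [PECA, energyA_neg] using hpec

lemma PECA.exists_le_swap {J : Type*} {lam d : J → ℝ} (hpec : PECA lam d) :
    ∃ C, ∀ a b, a ≠ b → C ≤ (lam a - lam b) * (d b - d a) := by
  classical
  obtain ⟨C, hC⟩ := hpec
  exact ⟨C, fun a b hab => energyA_swap lam d hab ▸ hC _ (isFinPerm_swap a b)⟩

lemma PECA.bddBelow_level {J : Type*} {lam d : J → ℝ} (hpec : PECA lam d) {m : ℝ} {a : J}
    (ha : m < lam a) : BddBelow (d '' {j | lam j = m}) := by
  obtain ⟨C, hC⟩ := hpec.exists_le_swap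
  have hpos : 0 < lam a - m := sub_pos.mpr ha
  refine ⟨d a + C / (lam a - m), ?_⟩
  rintro _ ⟨j, hj : lam j = m, rfl⟩
  have hne : a ≠ j := by rintro rfl; exact ha.ne' hj
  have hCj := hC a j hne
  rw [hj, mul_comm, ← div_le_iff₀ hpos] at hCj
  linarith

lemma PECA.bddAbove_level {J : Type*} {lam d : J → ℝ} (hpec : PECA lam d) {m : ℝ} {a : J}
    (ha : lam a < m) : BddAbove (d '' {j | lam j = m}) := by
  have hbdd := hpec.neg.bddBelow_level (a := a) (m := -m) (neg_lt_neg ha)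
  have hlevel : {j | (-lam) j = -m} = {j | lam j = m} := by simp
  rw [hlevel, Pi.neg_def, ← Set.image_image Neg.neg d, Set.image_neg_eq_neg, bddBelow_neg] at hbdd
  exact hbdd

theorem pecA_essentially_bounded_general (J : Type*) (lam d : J → ℝ)
    (hpec : PECA lam d) :
    ∀ m ∈ Set.range lam,
      ((∃ n ∈ Set.range lam, m < n) → BddBelow (d '' {j | lam j = m})) ∧
      ((∃ n ∈ Set.range lam, n < m) → BddAbove (d '' {j | lam j = m})) := by
  rintro m -
  exact ⟨fun ⟨_, ⟨_, rfl⟩, h⟩ => hpec.bddBelow_level h,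
    fun ⟨_, ⟨_, rfl⟩, h⟩ => hpec.bddAbove_level h⟩

theorem pecA_essentially_bounded (J : Type*) [Infinite J] (lam d : J → ℝ)
    (hpec : PECA lam d) :
    ∀ m ∈ Set.range lam,
      ((∃ n ∈ Set.range lam, m < n) → BddBelow (d '' {j | lam j = m})) ∧
      ((∃ n ∈ Set.range lam, n < m) → BddAbove (d '' {j | lam j = m})) :=
  pecA_essentially_bounded_general J lam d hpec
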